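/- Let p be a prime and 0 < m < p/2. Then the normalized Apéry-like numbers Ã_2(n) = Σ_{k=0}^n (-1)^k C(-1/2,k)² C(n,k) (which lie in ℤ_p for p odd) satisfy Ã_2(m p^r) ≡ Ã_2(m p^{r-1}) (mod p^r ℤ_p) for all integers r ≥ 1. -/

import Mathlib

/-- Generalized binomial coefficient `C(a,k) = a(a-1)⋯(a-k+1)/k!` over `ℚ`. -/
def qbinom (a : ℚ) (k : ℕ) : ℚ :=
  (∏ i ∈ Finset.range k, (a - i)) / k.factorial

/-- Normalized Apéry-like numbers `Ã₂(n) = Σ_{k=0}^n (-1)^k C(-1/2,k)² C(n,k)`. -/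
def Atilde2 (n : ℕ) : ℚ :=
  ∑ k ∈ Finset.range (n + 1), (-1) ^ k * (qbinom (-(1 / 2)) k) ^ 2 * (n.choose k : ℚ)

/-!
`16ⁿ Ã₂(n)` is the coefficient of `xⁿyⁿ` in `P(x,y)ⁿ` for `P = 16xy - (1+x)²(1+y)²`.
Over `𝔽_p` we have `P^p = P(x^p, y^p)`, and raising to the power `p^s` lifts this to
`P^(p^(s+1)) ≡ P(x^p, y^p)^(p^s) mod p^(s+1)`. Comparing diagonal coefficients gives the Gauss
congruence `a(pM) ≡ a(M) mod p^(s+1)` whenever `p^s ∣ M`. For odd `p` the normalising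
factor `16ⁿ` is a `p`-adic unit with `16^((p-1)M) ≡ 1 mod p^(s+1)`, so the congruence passes
to `Ã₂`.
-/

open Polynomial

noncomputable def diagCoeff {R : Type*} [Semiring R] (n : ℕ) : R[X][X] →+ R where
  toFun f := (f.coeff n).coeff n
  map_zero' := by simp
  map_add' f g := by simp

section DiagCoeff

variable {R : Type*} [Semiring R]

theorem diagCoeff_apply (n : ℕ) (f : R[X][X]) : diagCoeff n f = (f.coeff n).coeff n := rfl

theorem diagCoeff_C_C_mul (n : ℕ) (c : R) (f : R[X][X]) :
    diagCoeff n (C (C c) * f) = c * diagCoeff n f := by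
  rw [diagCoeff_apply, coeff_C_mul, coeff_C_mul, diagCoeff_apply]

theorem dvd_diagCoeff_of_C_C_dvd {c : R} {f : R[X][X]} (h : C (C c) ∣ f) (n : ℕ) :
    c ∣ diagCoeff n f := by
  obtain ⟨g, rfl⟩ := h
  rw [diagCoeff_C_C_mul]
  exact dvd_mul_right c _

theorem diagCoeff_C_mul_map_C (n : ℕ) (f g : R[X]) :
    diagCoeff n (C f * g.map C) = f.coeff n * g.coeff n := by
  rw [diagCoeff_apply, coeff_C_mul, coeff_map, coeff_mul_C]

end DiagCoeff

section BivariateExpand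

variable {R : Type*} [CommSemiring R]

variable (R) in
noncomputable def bivariateExpand (q : ℕ) : R[X][X] →+* R[X][X] :=
  (expand R[X] q).toRingHom.comp (mapRingHom (expand R q).toRingHom)

theorem diagCoeff_bivariateExpand {q : ℕ} (hq : 0 < q) (n : ℕ) (f : R[X][X]) :
    diagCoeff (q * n) (bivariateExpand R q f) = diagCoeff n f := by
  simp [bivariateExpand, diagCoeff_apply, coeff_expand_mul' hq]

theorem map_bivariateExpand {S : Type*} [CommSemiring S] (φ : R →+* S) (q : ℕ) (f : R[X][X]) :
    (bivariateExpand R q f).map (mapRingHom φ) = bivariateExpand S q (f.map (mapRingHom φ)) := by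
  simp only [bivariateExpand, RingHom.coe_comp, Function.comp_apply, AlgHom.toRingHom_eq_coe,
    RingHom.coe_coe, coe_mapRingHom, map_expand, map_map]
  congr 2
  exact RingHom.ext fun a => by simp [map_expand]

end BivariateExpand

theorem bivariateExpand_zmod (p : ℕ) [Fact p.Prime] (f : (ZMod p)[X][X]) :
    bivariateExpand (ZMod p) p f = f ^ p := by
  have hfrob : frobenius (ZMod p)[X] p = (expand (ZMod p) p).toRingHom :=
    RingHom.ext fun g => by simp [frobenius_def, ZMod.expand_card]
  rw [← map_frobenius_expand p f, hfrob, bivariateExpand]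
  simp [map_expand]

theorem natCast_dvd_pow_sub_bivariateExpand (p : ℕ) [Fact p.Prime] (P : ℤ[X][X]) :
    (p : ℤ[X][X]) ∣ P ^ p - bivariateExpand ℤ p P := by
  have hzero :
      (P ^ p - bivariateExpand ℤ p P).map (mapRingHom (Int.castRingHom (ZMod p))) = 0 := by
    rw [Polynomial.map_sub, Polynomial.map_pow, map_bivariateExpand, bivariateExpand_zmod, sub_self]
  rw [← map_natCast C, ← map_natCast C, C_dvd_iff_dvd_coeff]
  intro i
  rw [C_dvd_iff_dvd_coeff]
  intro j
  simpa only [coeff_map, coe_mapRingHom, coeff_zero, eq_intCast,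
    ZMod.intCast_zmod_eq_zero_iff_dvd] using congrArg (fun F => (F.coeff i).coeff j) hzero

theorem natCast_pow_succ_dvd_pow_sub_pow {R : Type*} [CommRing R] {p : ℕ} {a b : R}
    (h : (p : R) ∣ a - b) (s t : ℕ) :
    (p : R) ^ (s + 1) ∣ a ^ (p ^ s * t) - b ^ (p ^ s * t) := by
  simpa only [pow_mul] using (dvd_sub_pow_of_dvd_sub h s).trans (sub_dvd_pow_sub_pow _ _ t)

theorem prime_pow_succ_dvd_diagCoeff_pow_mul_sub {p : ℕ} [Fact p.Prime] (P : ℤ[X][X])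
    {s M : ℕ} (hM : p ^ s ∣ M) :
    (p : ℤ) ^ (s + 1) ∣ diagCoeff (p * M) (P ^ (p * M)) - diagCoeff M (P ^ M) := by
  obtain ⟨t, rfl⟩ := hM
  have hpoly : (p : ℤ[X][X]) ^ (s + 1) ∣
      P ^ (p * (p ^ s * t)) - bivariateExpand ℤ p (P ^ (p ^ s * t)) := by
    rw [pow_mul, map_pow]
    exact natCast_pow_succ_dvd_pow_sub_pow (natCast_dvd_pow_sub_bivariateExpand p P) s t
  rw [← diagCoeff_bivariateExpand (Fact.out : p.Prime).pos _ (P ^ (p ^ s * t)), ← map_sub]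
  exact dvd_diagCoeff_of_C_C_dvd (by simpa using hpoly) _

theorem prime_pow_succ_dvd_pow_mul_sub_one {p : ℕ} (hp : p.Prime) {c : ℤ} (hc : IsCoprime c p)
    {s M : ℕ} (hM : p ^ s ∣ M) : (p : ℤ) ^ (s + 1) ∣ c ^ ((p - 1) * M) - 1 := by
  obtain ⟨t, rfl⟩ := hM
  simpa only [one_pow, pow_mul] using natCast_pow_succ_dvd_pow_sub_pow
    (Int.ModEq.pow_card_sub_one_eq_one hp hc).symm.dvd s t

theorem qbinom_succ (a : ℚ) (k : ℕ) : qbinom a (k + 1) = qbinom a k * (a - k) / (k + 1) := by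
  rw [qbinom, qbinom, Finset.prod_range_succ, Nat.factorial_succ]
  push_cast
  field_simp

theorem qbinom_neg_half (k : ℕ) : qbinom (-(1 / 2)) k = (-1 / 4) ^ k * k.centralBinom := by
  induction k with
  | zero => simp [qbinom]
  | succ k ih =>
    have h := Nat.succ_mul_centralBinom_succ k
    rw [qbinom_succ, ih, div_eq_iff (by positivity)]
    qify at h
    linear_combination -(-1 / 4 : ℚ) ^ (k + 1) * h

/-- `16xy - (1+x)²(1+y)²`, with `x` the outer variable and `y = C X` the inner one. -/
noncomputable def aperyPoly : ℤ[X][X] := C (16 * X) * X - C ((X + 1) ^ 2) * (X + 1) ^ 2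

noncomputable def aperyCoeff (n : ℕ) : ℤ := diagCoeff n (aperyPoly ^ n)

theorem coeff_X_pow_sub_mul_X_add_one_pow_two_mul {R : Type*} [Semiring R] {n k : ℕ}
    (hk : k ≤ n) : ((X ^ (n - k) * (X + 1) ^ (2 * k) : R[X])).coeff n = k.centralBinom := by
  rw [coeff_X_pow_mul', if_pos (Nat.sub_le n k), Nat.sub_sub_self hk, coeff_X_add_one_pow,
    Nat.centralBinom_eq_two_mul_choose]

theorem aperyCoeff_eq_sum (n : ℕ) :
    aperyCoeff n = ∑ k ∈ Finset.range (n + 1),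
      ((-1) ^ k * 16 ^ (n - k) * n.choose k * k.centralBinom ^ 2 : ℤ) := by
  rw [aperyCoeff, aperyPoly, sub_eq_neg_add, add_pow, map_sum]
  refine Finset.sum_congr rfl fun k hk => ?_
  have hk : k ≤ n := Finset.mem_range_succ_iff.1 hk
  have hterm : (-(C ((X + 1) ^ 2) * (X + 1) ^ 2 : ℤ[X][X])) ^ k *
      (C (16 * X) * (X : ℤ[X][X])) ^ (n - k) * (n.choose k : ℤ[X][X]) =
      C (C ((-1) ^ k * 16 ^ (n - k) * n.choose k : ℤ)) *
      (C (X ^ (n - k) * (X + 1) ^ (2 * k)) * (X ^ (n - k) * (X + 1) ^ (2 * k) : ℤ[X]).map C) := by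
    simp only [Polynomial.map_mul, Polynomial.map_pow, map_X, Polynomial.map_add,
      Polynomial.map_one, map_mul, map_pow, map_neg, map_one, map_add, map_natCast, C_ofNat]
    rw [neg_pow (R := ℤ[X][X]), mul_pow, ← pow_mul, ← pow_mul]
    ring
  rw [hterm, diagCoeff_C_C_mul, diagCoeff_C_mul_map_C, coeff_X_pow_sub_mul_X_add_one_pow_two_mul hk]
  ring

theorem aperyCoeff_eq (n : ℕ) : (aperyCoeff n : ℚ) = 16 ^ n * Atilde2 n := by
  rw [aperyCoeff_eq_sum, Atilde2, Finset.mul_sum]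
  push_cast
  refine Finset.sum_congr rfl fun k hk => ?_
  have hsq : ((-1 / 4 : ℚ) ^ k) ^ 2 = (16 ^ k)⁻¹ := by
    rw [← pow_mul, mul_comm, pow_mul, ← inv_pow]; norm_num
  rw [qbinom_neg_half, mul_pow, hsq, pow_sub₀ _ (by norm_num) (Finset.mem_range_succ_iff.1 hk)]
  ring

theorem atilde2_mul_sub {p : ℕ} (hp : 0 < p) (M : ℕ) :
    Atilde2 (p * M) - Atilde2 M =
      ((aperyCoeff (p * M) - 16 ^ ((p - 1) * M) * aperyCoeff M : ℤ) : ℚ) / 16 ^ (p * M) := by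
  have hsplit : (16 : ℚ) ^ (p * M) = 16 ^ ((p - 1) * M) * 16 ^ M := by
    rw [← pow_add, ← Nat.succ_mul, Nat.succ_eq_add_one, Nat.sub_one_add_one hp.ne']
  rw [eq_div_iff (by positivity)]
  push_cast
  rw [aperyCoeff_eq, aperyCoeff_eq, hsplit]
  ring

theorem prime_pow_succ_dvd_aperyCoeff_mul_sub {p : ℕ} [Fact p.Prime] (h16 : p.Coprime 16)
    {s M : ℕ} (hM : p ^ s ∣ M) :
    (p : ℤ) ^ (s + 1) ∣ aperyCoeff (p * M) - 16 ^ ((p - 1) * M) * aperyCoeff M := by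
  have hgauss : (p : ℤ) ^ (s + 1) ∣ aperyCoeff (p * M) - aperyCoeff M :=
    prime_pow_succ_dvd_diagCoeff_pow_mul_sub aperyPoly hM
  have hunit : (p : ℤ) ^ (s + 1) ∣ 16 ^ ((p - 1) * M) - 1 :=
    prime_pow_succ_dvd_pow_mul_sub_one Fact.out
      (by exact_mod_cast Nat.isCoprime_iff_coprime.2 h16.symm) hM
  rw [show aperyCoeff (p * M) - 16 ^ ((p - 1) * M) * aperyCoeff M
    = (aperyCoeff (p * M) - aperyCoeff M) - (16 ^ ((p - 1) * M) - 1) * aperyCoeff M by ring]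
  exact dvd_sub hgauss (hunit.mul_right _)

/-- For a prime `p` and `0 < m < p/2`, the congruence
`Ã₂(m p^r) ≡ Ã₂(m p^{r-1}) (mod p^r ℤ_p)` holds for all `r ≥ 1`; stated via the
`p`-adic norm: `‖Ã₂(m p^r) - Ã₂(m p^{r-1})‖_p ≤ p^{-r}`. -/
theorem stmt_16 (p : ℕ) [Fact p.Prime] (m : ℕ) (hm : 0 < m) (hmp : 2 * m < p)
    (r : ℕ) (hr : 1 ≤ r) :
    ‖((Atilde2 (m * p ^ r) : ℚ_[p])) - ((Atilde2 (m * p ^ (r - 1)) : ℚ_[p]))‖ ≤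
      (p : ℝ) ^ (-(r : ℤ)) := by
  have hp : p.Prime := Fact.out
  have h16 : p.Coprime 16 :=
    Nat.Coprime.pow_right 4 ((Nat.coprime_primes hp Nat.prime_two).2 (by omega))
  obtain ⟨s, rfl⟩ : ∃ s, r = s + 1 := ⟨r - 1, by omega⟩
  rw [Nat.add_sub_cancel, show m * p ^ (s + 1) = p * (m * p ^ s) by ring, ← Rat.cast_sub,
    atilde2_mul_sub hp.pos]
  push_cast
  rw [norm_div, norm_pow, show (16 : ℚ_[p]) = ((16 : ℕ) : ℚ_[p]) by norm_num,
    Padic.norm_natCast_eq_one_iff.2 h16, one_pow, div_one]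
  exact_mod_cast (Padic.norm_int_le_pow_iff_dvd _ (s + 1)).2
    (prime_pow_succ_dvd_aperyCoeff_mul_sub h16 (dvd_mul_left _ _))
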